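/- arXiv:2506.18776 — 2 statements merged into one kernel-verified Lean document; each statement's English description precedes it below -/
import Mathlib

section
/- Let Λ be a countable abelian group. Suppose that every finite subset S of Λ is contained in a subgroup H ≤ Λ such that H is free abelian and the quotient Λ/H is torsion-free. Then Λ is free abelian. -/
/-!
Enumerate `Λ = {e₀, e₁, …}` and let `Kₙ` be the saturation of the span of `e₀, …, eₙ₋₁`, i.e. the
elements some nonzero multiple of which lies in that span. A pure free subgroup `H` containing these
elements contains `Kₙ`, and since the span of part of a basis of `H` is saturated in `H`, `Kₙ` lies
in the span of finitely many basis vectors; hence `Kₙ` is finitely generated. Each `Kₙ₊₁ / Kₙ` is a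
finitely generated subgroup of the torsion-free group `Λ / Kₙ`, hence free, so a basis of `Kₙ`
extends to one of `Kₙ₊₁`. The union of these nested bases is a basis of `Λ`.
-/

open Submodule Set

namespace Submodule

variable {R M : Type*} [CommRing R] [IsDomain R] [AddCommGroup M] [Module R M]

def saturation (p : Submodule R M) : Submodule R M where
  carrier := {x | ∃ c : R, c ≠ 0 ∧ c • x ∈ p}
  add_mem' := by
    rintro x y ⟨c, hc, hcx⟩ ⟨d, hd, hdy⟩
    refine ⟨c * d, mul_ne_zero hc hd, ?_⟩
    rw [smul_add, mul_smul, mul_smul, smul_comm c d x]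
    exact add_mem (p.smul_mem d hcx) (p.smul_mem c hdy)
  zero_mem' := ⟨1, one_ne_zero, by simp⟩
  smul_mem' := by
    rintro z x ⟨c, hc, hcx⟩
    exact ⟨c, hc, by rw [smul_comm]; exact p.smul_mem z hcx⟩

theorem le_saturation (p : Submodule R M) : p ≤ p.saturation :=
  fun x hx => ⟨1, one_ne_zero, by simpa using hx⟩

theorem saturation_mono {p q : Submodule R M} (hpq : p ≤ q) : p.saturation ≤ q.saturation := by
  rintro x ⟨c, hc, hcx⟩
  exact ⟨c, hc, hpq hcx⟩

instance isTorsionFree_quotient_saturation (p : Submodule R M) :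
    Module.IsTorsionFree R (M ⧸ p.saturation) := by
  refine .of_smul_eq_zero fun c x hcx => ?_
  obtain ⟨x, rfl⟩ := p.saturation.mkQ_surjective x
  rcases eq_or_ne c 0 with rfl | hc
  · exact .inl rfl
  rw [← map_smul, mkQ_apply, Quotient.mk_eq_zero] at hcx
  obtain ⟨d, hd, hdcx⟩ := hcx
  exact .inr <| (Quotient.mk_eq_zero _).2 ⟨d * c, mul_ne_zero hd hc, by rwa [mul_smul]⟩

theorem saturation_bot [Module.IsTorsionFree R M] : (⊥ : Submodule R M).saturation = ⊥ :=
  eq_bot_iff.2 fun x ⟨c, hc, hcx⟩ => by simpa [hc] using hcx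

theorem saturation_map_subtype_le {H : Submodule R M} (hH : H.saturation ≤ H)
    (N : Submodule R H) : (N.map H.subtype).saturation ≤ N.saturation.map H.subtype := by
  rintro x ⟨c, hc, y, hy, hyx⟩
  have hxH : x ∈ H := hH ⟨c, hc, hyx ▸ y.2⟩
  obtain rfl : y = c • ⟨x, hxH⟩ := Subtype.ext hyx
  exact ⟨⟨x, hxH⟩, ⟨c, hc, hy⟩, rfl⟩

end Submodule

theorem Module.Basis.saturation_span_image {ι R M : Type*} [CommRing R] [IsDomain R]
    [AddCommGroup M] [Module R M] (b : Basis ι R M) (s : Set ι) :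
    (span R (b '' s)).saturation = span R (b '' s) := by
  refine le_antisymm (fun x ⟨c, hc, hcx⟩ => ?_) (le_saturation _)
  rwa [b.mem_span_image, map_smul, Finsupp.support_smul_eq hc, ← b.mem_span_image] at hcx

theorem Submodule.fg_saturation_span {R M : Type*} [CommRing R] [IsDomain R] [IsNoetherianRing R]
    [AddCommGroup M] [Module R M] {H : Submodule R M} [Module.Free R H] (hH : H.saturation ≤ H)
    {S : Set M} (hS : S.Finite) (hSH : S ⊆ H) : (span R S).saturation.FG := by
  let b := Module.Free.chooseBasis R H
  obtain ⟨T, hT, hS'T⟩ : ∃ T : Set (Module.Free.ChooseBasisIndex R H),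
      T.Finite ∧ ∀ x : H, ↑x ∈ S → ↑(b.repr x).support ⊆ T := by
    refine ⟨⋃ x ∈ Subtype.val ⁻¹' S, ↑(b.repr x).support,
      (hS.preimage Subtype.val_injective.injOn).biUnion fun x _ => (b.repr x).support.finite_toSet,
      fun x hx => ?_⟩
    exact subset_biUnion_of_mem
      (u := fun y => ((b.repr y).support : Set (Module.Free.ChooseBasisIndex R H))) hx
  let N := span R (b '' T)
  have hSN : span R S ≤ N.map H.subtype := span_le.2 fun x hx =>
    ⟨⟨x, hSH hx⟩, b.mem_span_image.2 (hS'T _ hx), rfl⟩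
  refine FG.of_le ((fg_span (hT.image b)).map H.subtype) ?_
  calc (span R S).saturation ≤ (N.map H.subtype).saturation := saturation_mono hSN
    _ ≤ N.saturation.map H.subtype := saturation_map_subtype_le hH N
    _ = N.map H.subtype := by rw [b.saturation_span_image]

theorem Submodule.exists_linearIndepOn_id_extend_of_free_map {R M : Type*} [Ring R] [Nontrivial R]
    [AddCommGroup M] [Module R M] {K K' : Submodule R M} (hKK' : K ≤ K')
    [Module.Free R (K'.map K.mkQ)] {s : Set M} (hs : LinearIndepOn R id s) (hsK : span R s = K) :
    ∃ t, s ⊆ t ∧ LinearIndepOn R id t ∧ span R t = K' := by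
  let b := Module.Free.chooseBasis R (K'.map K.mkQ)
  choose y hyK' hy using fun i => (b i).2
  have hyb : K.mkQ ∘ y = Subtype.val ∘ b := funext hy
  have hli : LinearIndependent R (K.mkQ ∘ y) :=
    hyb ▸ b.linearIndependent.map' _ (ker_subtype _)
  refine ⟨s ∪ range y, subset_union_left, ?_, le_antisymm ?_ ?_⟩
  · refine hs.union_id_of_quotient (hsK ▸ subset_span) ?_
    exact (linearIndepOn_range_iff hli.of_comp.injective _).2 hli
  · exact span_le.2 <| union_subset (fun x hx => hKK' (hsK ▸ subset_span hx))
      (range_subset_iff.2 hyK')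
  · rw [span_union, hsK, ← comap_map_mkQ]
    intro x hx
    rw [mem_comap, map_span, ← range_comp, hyb, range_comp, ← coe_subtype, ← map_span,
      b.span_eq, map_top, range_subtype]
    exact mem_map_of_mem hx

theorem Module.free_of_monotone_of_free_map_mkQ {R M : Type*} [Ring R] [Nontrivial R]
    [AddCommGroup M] [Module R M] (K : ℕ → Submodule R M) (hK : Monotone K) (h0 : K 0 = ⊥)
    (htop : ⨆ n, K n = ⊤) (hfree : ∀ n, Module.Free R ((K (n + 1)).map (K n).mkQ)) :
    Module.Free R M := by
  -- Quantified over all `s`, so that `choose` yields a total extension function `T n`.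
  have step : ∀ n (s : Set M), ∃ t, s ⊆ t ∧
      (LinearIndepOn R id s ∧ span R s = K n → LinearIndepOn R id t ∧ span R t = K (n + 1)) := by
    intro n s
    by_cases hs : LinearIndepOn R id s ∧ span R s = K n
    · obtain ⟨t, hst, ht⟩ := exists_linearIndepOn_id_extend_of_free_map (hK n.le_succ) hs.1 hs.2
      exact ⟨t, hst, fun _ => ht⟩
    · exact ⟨s, subset_rfl, fun h => absurd h hs⟩
  choose T hsub hT using step
  let B : ℕ → Set M := fun n => Nat.rec ∅ T n
  have hB : ∀ n, LinearIndepOn R id (B n) ∧ span R (B n) = K n := by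
    intro n
    induction n with
    | zero => exact ⟨linearIndepOn_empty R id, by simp [B, h0]⟩
    | succ n ih => exact hT n _ ih
  have hmono : Monotone B := monotone_nat_of_le_succ fun n => hsub n (B n)
  have hli : LinearIndepOn R id (⋃ n, B n) :=
    linearIndepOn_iUnion_of_directed hmono.directed_le fun n => (hB n).1
  have hspan : span R (⋃ n, B n) = ⊤ := by simp only [span_iUnion, (hB _).2, htop]
  exact .of_basis (Basis.mk hli (by rw [← hspan]; exact span_mono fun y hy => ⟨⟨y, hy⟩, rfl⟩))

theorem Module.free_of_countable_of_fg_saturation {R M : Type*} [CommRing R] [IsDomain R]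
    [IsPrincipalIdealRing R] [AddCommGroup M] [Module R M] [Countable M] [Module.IsTorsionFree R M]
    (h : ∀ S : Finset M, (span R (S : Set M)).saturation.FG) : Module.Free R M := by
  classical
  obtain ⟨e, he⟩ := exists_surjective_nat M
  let K : ℕ → Submodule R M := fun n => (span R ((Finset.range n).image e : Set M)).saturation
  refine free_of_monotone_of_free_map_mkQ K (fun m n hmn => ?_) (by simp [K, saturation_bot])
    (eq_top_iff.2 fun x _ => ?_) fun n => ?_
  · exact saturation_mono <| span_mono <| by gcongr
  · obtain ⟨m, rfl⟩ := he x
    exact mem_iSup_of_mem (m + 1) (le_saturation _ (subset_span (by simpa using ⟨m, le_rfl, rfl⟩)))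
  · have : Module.Finite R ((K (n + 1)).map (K n).mkQ) := Module.Finite.iff_fg.2 ((h _).map _)
    infer_instance

theorem Module.IsTorsionFree.of_forall_mem_free {R M : Type*} [CommRing R] [IsDomain R]
    [AddCommGroup M] [Module R M] (h : ∀ x : M, ∃ H : Submodule R M, x ∈ H ∧ Module.Free R H) :
    Module.IsTorsionFree R M := by
  refine .of_smul_eq_zero fun c x hcx => ?_
  obtain ⟨H, hx, _⟩ := h x
  simpa using (smul_eq_zero (r := c) (m := (⟨x, hx⟩ : H))).1 (Subtype.ext hcx)

theorem AddSubgroup.saturation_toIntSubmodule_le {Λ : Type*} [AddCommGroup Λ] {H : AddSubgroup Λ}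
    (hH : ∀ (x : Λ) (n : ℕ), 0 < n → n • x ∈ H → x ∈ H) :
    H.toIntSubmodule.saturation ≤ H.toIntSubmodule := by
  rintro x ⟨c, hc, hcx⟩
  change c • x ∈ H at hcx
  obtain ⟨n, rfl | rfl⟩ := Int.eq_nat_or_neg c <;>
    exact hH x n (by omega) (by simpa using hcx)

/-- Pontryagin's criterion: a countable abelian group `Λ` is free abelian provided every
finite subset of `Λ` is contained in a free abelian subgroup `H` with `Λ/H` torsion-free. -/
theorem stmt6 {Λ : Type*} [AddCommGroup Λ] [Countable Λ]
    (h : ∀ S : Finset Λ, ∃ H : AddSubgroup Λ, (S : Set Λ) ⊆ H ∧ Module.Free ℤ H ∧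
      ∀ (x : Λ) (n : ℕ), 0 < n → n • x ∈ H → x ∈ H) :
    Module.Free ℤ Λ := by
  have : Module.IsTorsionFree ℤ Λ := .of_forall_mem_free fun x => by
    obtain ⟨H, hxH, hfree, -⟩ := h {x}
    exact ⟨H.toIntSubmodule, hxH (by simp), hfree⟩
  refine Module.free_of_countable_of_fg_saturation fun S => ?_
  obtain ⟨H, hSH, hfree, hpure⟩ := h S
  have : Module.Free ℤ H.toIntSubmodule := hfree
  exact fg_saturation_span (AddSubgroup.saturation_toIntSubmodule_le hpure) S.finite_toSet hSH
end

section
/- Let Λ be a countable abelian group on which multiplication by any positive integer is injective, and suppose that for every finitely generated subgroup S of Λ there is a free abelian subgroup F ≤ Λ containing S such that the torsion subgroup of Λ/F has finite exponent. Then Λ is free abelian. -/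
open Submodule Function Set

section Helpers

variable {Λ : Type*} [AddCommGroup Λ]

/-- FG submodule dominates FG submodule over ℤ. -/
lemma aux_fg_of_le_fg {N P : Submodule ℤ Λ} (h : N ≤ P) (hP : P.FG) : N.FG := by
  haveI : Module.Finite ℤ ↥P := Module.Finite.iff_fg.mpr hP
  haveI : IsNoetherian ℤ ↥P := isNoetherian_of_isNoetherianRing_of_finite ℤ ↥P
  have h1 : (Submodule.comap P.subtype N).FG := IsNoetherian.noetherian _
  have h2 := h1.map P.subtype
  rwa [Submodule.map_comap_subtype, inf_eq_right.mpr h] at h2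

lemma aux_tf (hinj : ∀ n : ℕ, 0 < n → Function.Injective fun x : Λ => n • x)
    {c : ℤ} {x : Λ} (hc : c ≠ 0) (h : c • x = 0) : x = 0 := by
  have hpos : 0 < c.natAbs := Int.natAbs_pos.mpr hc
  have hz : c.natAbs • x = 0 := by
    have : (c.natAbs : ℤ) • x = 0 := by
      rcases Int.natAbs_eq c with h' | h'
      · rw [← h']; exact h
      · have : (-(c.natAbs : ℤ)) • x = 0 := by rw [← h']; exact h
        rw [neg_smul] at this
        simpa using this
    simpa [natCast_zsmul] using this
  have := hinj c.natAbs hpos (a₁ := x) (a₂ := 0) (by simpa using hz)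
  exact this

end Helpers

section Pure

variable {Λ : Type*} [AddCommGroup Λ]

/-- The purification of a submodule. -/
def purify (B : Submodule ℤ Λ) : Submodule ℤ Λ where
  carrier := {x | ∃ n : ℕ, 0 < n ∧ n • x ∈ B}
  zero_mem' := ⟨1, one_pos, by simp⟩
  add_mem' := by
    rintro a b ⟨n, hn, ha⟩ ⟨k, hk, hb⟩
    refine ⟨n * k, Nat.mul_pos hn hk, ?_⟩
    have ha' : (n * k) • a ∈ B := by
      rw [mul_comm, mul_smul, ← natCast_zsmul]
      exact B.smul_mem _ ha
    have hb' : (n * k) • b ∈ B := by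
      rw [mul_smul, ← natCast_zsmul]
      exact B.smul_mem _ hb
    rw [smul_add]
    exact B.add_mem ha' hb'
  smul_mem' := by
    rintro c x ⟨n, hn, hx⟩
    exact ⟨n, hn, by
      have : n • (c • x) = c • (n • x) := smul_comm _ _ _
      rw [this]; exact B.smul_mem c hx⟩

lemma mem_purify {B : Submodule ℤ Λ} {x : Λ} :
    x ∈ purify B ↔ ∃ n : ℕ, 0 < n ∧ n • x ∈ B := Iff.rfl

lemma le_purify (B : Submodule ℤ Λ) : B ≤ purify B :=
  fun x hx => ⟨1, one_pos, by simpa using hx⟩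

lemma purify_pure (B : Submodule ℤ Λ) :
    ∀ (x : Λ) (n : ℕ), 0 < n → n • x ∈ purify B → x ∈ purify B := by
  rintro x n hn ⟨k, hk, hkx⟩
  exact ⟨k * n, Nat.mul_pos hk hn, by rwa [mul_smul]⟩

end Pure

section PureFG

variable {Λ : Type*} [AddCommGroup Λ]

lemma aux_purify_fg
    (hinj : ∀ n : ℕ, 0 < n → Function.Injective fun x : Λ => n • x)
    (h : ∀ S : Finset Λ, ∃ F : AddSubgroup Λ, (S : Set Λ) ⊆ F ∧ Module.Free ℤ F ∧
      ∃ m : ℕ, 0 < m ∧ ∀ x : Λ, (∃ n : ℕ, 0 < n ∧ n • x ∈ F) → m • x ∈ F)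
    (s : Finset Λ) : (purify (span ℤ (s : Set Λ))).FG := by
  classical
  obtain ⟨F, hsF, hFfree, m, hm, hmF⟩ := h s
  haveI : Module.Free ℤ ↥F := hFfree
  set B : Submodule ℤ Λ := span ℤ (s : Set Λ) with hB
  set b := Module.Free.chooseBasis ℤ ↥F with hb
  set ι := Module.Free.ChooseBasisIndex ℤ ↥F
  -- the finite set of basis indices supporting the generators
  set J : Finset ι := s.attach.biUnion
    (fun g => (b.repr ⟨g.1, hsF g.2⟩).support) with hJ
  set u : Finset Λ := J.image (fun j => ((b j : ↥F) : Λ)) with hu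
  -- B ≤ F
  have hBF : ∀ x ∈ B, x ∈ F := by
    intro x hx
    exact span_le.mpr (show (s : Set Λ) ⊆ (AddSubgroup.toIntSubmodule F : Set Λ) from hsF) hx
  -- elements of F whose coe lies in B are in the span of the J-basis vectors
  have hlift : ∀ z : ↥F, (z : Λ) ∈ B → z ∈ span ℤ ((b : ι → ↥F) '' (J : Set ι)) := by
    intro z hz
    have himg : (Subtype.val '' (Subtype.val ⁻¹' (s : Set Λ) : Set ↥F)) = (s : Set Λ) := by
      apply Set.image_preimage_eq_of_subset
      intro x hx
      exact ⟨⟨x, hsF hx⟩, rfl⟩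
    have hmap : (z : Λ) ∈ Submodule.map (AddSubgroup.toIntSubmodule F).subtype
        (span ℤ ((Subtype.val ⁻¹' (s : Set Λ) : Set ↥F))) := by
      erw [Submodule.map_span]
      show (z : Λ) ∈ span ℤ (Subtype.val '' (Subtype.val ⁻¹' (s : Set Λ) : Set ↥F))
      rw [himg]
      exact hz
    obtain ⟨w, hw, hwz⟩ := hmap
    have hwz' : w = z := Subtype.ext hwz
    subst hwz'
    -- each lift of an element of s lies in span (b '' J)
    revert hw
    apply span_le.mpr
    rintro ⟨g, hgF⟩ hg
    change g ∈ (s : Set Λ) at hg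
    show (⟨g, hgF⟩ : ↥F) ∈ span ℤ ((b : ι → ↥F) '' (J : Set ι))
    rw [Module.Basis.mem_span_image]
    intro i hi
    refine Finset.mem_coe.mpr (Finset.mem_biUnion.mpr ⟨⟨g, hg⟩, Finset.mem_attach _ _, ?_⟩)
    exact Finset.mem_coe.mp hi
  -- m • (purify B) ⊆ span u
  have hkey : ∀ x ∈ purify B, m • x ∈ span ℤ (u : Set Λ) := by
    rintro x ⟨n, hn, hnx⟩
    have hyF : m • x ∈ F := hmF x ⟨n, hn, hBF _ hnx⟩
    set y : ↥F := ⟨m • x, hyF⟩ with hy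
    have hny : ((n • y : ↥F) : Λ) ∈ B := by
      show n • (m • x) ∈ B
      rw [smul_comm, ← natCast_zsmul]
      exact B.smul_mem _ hnx
    have h1 : n • y ∈ span ℤ ((b : ι → ↥F) '' (J : Set ι)) := hlift _ hny
    have h2 : ↑(b.repr (n • y)).support ⊆ (J : Set ι) :=
      Module.Basis.repr_support_subset_of_mem_span b _ h1
    have h3 : ↑(b.repr y).support ⊆ (J : Set ι) := by
      intro i hi
      apply h2
      simp only [Finset.mem_coe, Finsupp.mem_support_iff] at hi ⊢
      rw [map_nsmul]
      simp only [Finsupp.coe_smul, Pi.smul_apply, smul_eq_mul]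
      intro hcon
      rw [← natCast_zsmul] at hcon
      simp only [zsmul_eq_mul] at hcon
      exact hi (by
        have : (n : ℤ) ≠ 0 := by exact_mod_cast hn.ne'
        exact (mul_eq_zero.mp hcon).resolve_left this)
    have h4 : y ∈ span ℤ ((b : ι → ↥F) '' (J : Set ι)) := (Module.Basis.mem_span_image b).mpr h3
    have h5 : (y : Λ) ∈ span ℤ
        ((AddSubgroup.toIntSubmodule F).subtype '' ((b : ι → ↥F) '' (J : Set ι))) := by
      have : (y : Λ) ∈ Submodule.map (AddSubgroup.toIntSubmodule F).subtype
          (span ℤ ((b : ι → ↥F) '' (J : Set ι))) := ⟨y, h4, rfl⟩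
      rwa [Submodule.map_span] at this
    have hsub : ((AddSubgroup.toIntSubmodule F).subtype '' ((b : ι → ↥F) '' (J : Set ι)))
        ⊆ (u : Set Λ) := by
      rintro _ ⟨_, ⟨j, hj, rfl⟩, rfl⟩
      exact Finset.mem_coe.mpr (Finset.mem_image.mpr ⟨j, hj, rfl⟩)
    exact span_mono hsub h5
  -- conclude FG
  set f : Λ →ₗ[ℤ] Λ := (m : ℤ) • LinearMap.id with hf
  have hfeq : ∀ x : Λ, f x = m • x := by
    intro x; simp [hf, natCast_zsmul]
  have hfinj : Function.Injective f := by
    intro x y hxy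
    rw [hfeq, hfeq] at hxy
    exact hinj m hm hxy
  have hmapfg : (Submodule.map f (purify B)).FG := by
    apply aux_fg_of_le_fg (P := span ℤ (u : Set Λ))
    · rintro _ ⟨x, hx, rfl⟩
      rw [hfeq]
      exact hkey x hx
    · exact fg_span u.finite_toSet
  exact Submodule.fg_of_fg_map_injective f hfinj hmapfg

end PureFG

section Extend

variable {Λ : Type*} [AddCommGroup Λ]

lemma aux_extend {N M : Submodule ℤ Λ} (hNM : N ≤ M) (hMfg : M.FG)
    (hpure : ∀ (x : Λ) (n : ℕ), 0 < n → n • x ∈ N → x ∈ N)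
    {T : Set Λ} (hTspan : span ℤ T = N)
    (hTind : LinearIndependent ℤ ((↑) : T → Λ)) :
    ∃ T' : Set Λ, T ⊆ T' ∧ span ℤ T' = M ∧ LinearIndependent ℤ ((↑) : T' → Λ) := by
  classical
  set N' : Submodule ℤ ↥M := Submodule.comap M.subtype N with hN'
  haveI : Module.Finite ℤ ↥M := Module.Finite.iff_fg.mpr hMfg
  haveI : Module.Finite ℤ (↥M ⧸ N') :=
    Module.Finite.of_surjective N'.mkQ (Submodule.Quotient.mk_surjective _)
  haveI : NoZeroSMulDivisors ℤ (↥M ⧸ N') := by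
    refine ⟨fun {c q} hcq => ?_⟩
    by_cases hc : c = 0
    · exact Or.inl hc
    · refine Or.inr ?_
      obtain ⟨x, rfl⟩ := Submodule.Quotient.mk_surjective N' q
      have hcx : c • x ∈ N' := by
        rw [← Submodule.Quotient.mk_smul] at hcq
        exact (Submodule.Quotient.mk_eq_zero _).mp hcq
      have hcx' : c • (x : Λ) ∈ N := hcx
      have hnat : c.natAbs • (x : Λ) ∈ N := by
        rcases Int.natAbs_eq c with h' | h'
        · rw [← natCast_zsmul, ← h']; exact hcx'
        · rw [← natCast_zsmul]
          have : (-(c.natAbs : ℤ)) • (x : Λ) ∈ N := by rw [← h']; exact hcx'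
          rw [neg_smul] at this
          simpa using N.neg_mem this
      have hxN : (x : Λ) ∈ N := hpure _ _ (Int.natAbs_pos.mpr hc) hnat
      rw [Submodule.Quotient.mk_eq_zero]
      exact hxN
  haveI hQfree : Module.Free ℤ (↥M ⧸ N') := Module.free_of_finite_type_torsion_free'
  set ι := Module.Free.ChooseBasisIndex ℤ (↥M ⧸ N')
  set bQ : Module.Basis ι ℤ (↥M ⧸ N') := Module.Free.chooseBasis ℤ _ with hbQ
  choose y hy using fun i => Submodule.Quotient.mk_surjective N' (bQ i)
  have hy' : ∀ i, N'.mkQ (y i) = bQ i := hy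
  set Y : Set Λ := Set.range (fun i => ((y i : Λ))) with hY
  have hYM : ∀ i, ((y i : Λ)) ∈ M := fun i => (y i).2
  refine ⟨T ∪ Y, Set.subset_union_left, ?_, ?_⟩
  · -- span
    apply le_antisymm
    · rw [span_union, hTspan]
      apply sup_le hNM
      rw [span_le]
      rintro _ ⟨i, rfl⟩
      exact hYM i
    · intro x hx
      set xM : ↥M := ⟨x, hx⟩ with hxM
      set c := bQ.repr (N'.mkQ xM) with hc
      have hrepr : ∑ i, c i • bQ i = N'.mkQ xM := by
        rw [hc]; exact bQ.sum_repr _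
      have h0 : N'.mkQ (xM - ∑ i, c i • y i) = 0 := by
        rw [map_sub, map_sum]
        simp only [map_smul, hy']
        rw [hrepr, sub_self]
      have hmem : (xM - ∑ i, c i • y i) ∈ N' := by
        rwa [← Submodule.Quotient.mk_eq_zero]
      have hmem' : x - ∑ i, c i • (y i : Λ) ∈ N := by
        have : ((xM - ∑ i, c i • y i : ↥M) : Λ) ∈ N := hmem
        simpa using this
      rw [span_union, hTspan]
      have hxdec : x = (x - ∑ i, c i • (y i : Λ)) + ∑ i, c i • (y i : Λ) := by abel
      rw [hxdec]
      refine Submodule.add_mem _ (Submodule.mem_sup_left hmem') (Submodule.mem_sup_right ?_)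
      refine Submodule.sum_mem _ fun i _ => Submodule.smul_mem _ _ (subset_span ⟨i, rfl⟩)
  · -- linear independence
    have hyind : LinearIndependent ℤ (fun i => ((y i : Λ))) := by
      have h1 : LinearIndependent ℤ (N'.mkQ ∘ y) := by
        have : (N'.mkQ ∘ y) = ⇑bQ := funext hy'
        rw [this]
        exact bQ.linearIndependent
      have h2 : LinearIndependent ℤ y := h1.of_comp N'.mkQ
      have h3 := h2.map' M.subtype (Submodule.ker_subtype M)
      exact h3
    have hdisj : Disjoint (span ℤ T) (span ℤ Y) := by
      rw [hTspan, disjoint_def]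
      intro v hvN hvY
      obtain ⟨a, ha⟩ := (mem_span_range_iff_exists_fun ℤ).mp hvY
      set w : ↥M := ∑ i, a i • y i with hw
      have hwv : (w : Λ) = v := by
        rw [hw, ← ha]
        simp
      have hwN' : w ∈ N' := by
        show (w : Λ) ∈ N
        rw [hwv]; exact hvN
      have h0 : ∑ i, a i • bQ i = 0 := by
        have := (Submodule.Quotient.mk_eq_zero N').mpr hwN'
        rw [show Submodule.Quotient.mk w = N'.mkQ w from rfl] at this
        rw [hw, map_sum] at this
        simpa only [map_smul, hy'] using this
      have ha0 : ∀ i, a i = 0 :=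
        Fintype.linearIndependent_iff.mp bQ.linearIndependent a h0
      rw [← hwv, hw]
      simp [ha0]
    exact LinearIndepOn.union (v := id) hTind hyind.linearIndepOn_id (by simpa only [Set.image_id] using hdisj)

end Extend

/-- Abstract form of Pottmeyer's criterion: a countable abelian group `Λ` on which
multiplication by every positive integer is injective is free abelian provided every finite
subset lies in a free abelian subgroup `F` such that the torsion subgroup of `Λ/F`
has finite exponent. -/
theorem stmt8 {Λ : Type*} [AddCommGroup Λ] [Countable Λ]
    (hinj : ∀ n : ℕ, 0 < n → Function.Injective fun x : Λ => n • x)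
    (h : ∀ S : Finset Λ, ∃ F : AddSubgroup Λ, (S : Set Λ) ⊆ F ∧ Module.Free ℤ F ∧
      ∃ m : ℕ, 0 < m ∧ ∀ x : Λ, (∃ n : ℕ, 0 < n ∧ n • x ∈ F) → m • x ∈ F) :
    Module.Free ℤ Λ := by
  classical
  have key : ∀ s : Finset Λ, ∃ A : Submodule ℤ Λ, (s : Set Λ) ⊆ A ∧ A.FG ∧
      ∀ (z : Λ) (n : ℕ), 0 < n → n • z ∈ A → z ∈ A := fun s =>
    ⟨purify (span ℤ (s : Set Λ)), subset_span.trans (le_purify _),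
      aux_purify_fg hinj h s, purify_pure _⟩
  have step : ∀ (B : Submodule ℤ Λ) (x : Λ), B.FG → ∃ A : Submodule ℤ Λ, B ≤ A ∧ x ∈ A ∧
      A.FG ∧ ∀ (z : Λ) (n : ℕ), 0 < n → n • z ∈ A → z ∈ A := by
    intro B x hfg
    obtain ⟨t, ht⟩ := hfg
    obtain ⟨A, hsub, hAfg, hApure⟩ := key (insert x t)
    refine ⟨A, ?_, hsub (by simp), hAfg, hApure⟩
    rw [← ht]
    apply span_le.mpr
    intro z hz
    exact hsub (by simp [hz])
  choose g hg1 hg2 hg3 hg4 using step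
  obtain ⟨e, he⟩ := exists_surjective_nat Λ
  have hbotpure : ∀ (z : Λ) (n : ℕ), 0 < n → n • z ∈ (⊥ : Submodule ℤ Λ) → z ∈ (⊥ : Submodule ℤ Λ) := by
    intro z n hn hz
    have h0 : n • z = 0 := by simpa using hz
    have : z = 0 := hinj n hn (a₁ := z) (a₂ := 0) (by simpa using h0)
    simp [this]
  let C : ℕ → {A : Submodule ℤ Λ // A.FG ∧ ∀ (z : Λ) (n : ℕ), 0 < n → n • z ∈ A → z ∈ A} :=
    fun n => Nat.rec ⟨⊥, Submodule.fg_bot, hbotpure⟩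
      (fun n p => ⟨g p.1 (e n) p.2.1, hg3 _ _ _, hg4 _ _ _⟩) n
  have hCsucc : ∀ n, (C n).1 ≤ (C (n + 1)).1 := fun n => hg1 _ _ _
  have hCe : ∀ n, e n ∈ (C (n + 1)).1 := fun n => hg2 _ _ _
  have ext : ∀ n (T : Set Λ), span ℤ T = (C n).1 → LinearIndependent ℤ ((↑) : T → Λ) →
      ∃ T' : Set Λ, T ⊆ T' ∧ span ℤ T' = (C (n + 1)).1 ∧
        LinearIndependent ℤ ((↑) : T' → Λ) :=
    fun n T h1 h2 => aux_extend (hCsucc n) (C (n + 1)).2.1 (C n).2.2 h1 h2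
  choose ext' hsub hspan hindep using ext
  let T : ∀ n : ℕ, {T : Set Λ // span ℤ T = (C n).1 ∧ LinearIndependent ℤ ((↑) : T → Λ)} :=
    fun n => Nat.rec
      (motive := fun n => {T : Set Λ // span ℤ T = (C n).1 ∧ LinearIndependent ℤ ((↑) : T → Λ)})
      ⟨(∅ : Set Λ), by simp [C], linearIndependent_empty ℤ Λ⟩
      (fun n p => ⟨ext' n p.1 p.2.1 p.2.2, hspan _ _ _ _, hindep _ _ _ _⟩) n
  have hTmono : ∀ n, (T n).1 ⊆ (T (n + 1)).1 := fun n => hsub n (T n).1 (T n).2.1 (T n).2.2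
  have hTdir : Directed (· ⊆ ·) (fun n => (T n).1) := by
    have hm : Monotone (fun n => (T n).1) := monotone_nat_of_le_succ hTmono
    exact hm.directed_le
  have hind : LinearIndependent ℤ ((↑) : (⋃ n, (T n).1) → Λ) :=
    linearIndepOn_iUnion_of_directed (v := id) hTdir (fun n => (T n).2.2)
  have hspanS : span ℤ (⋃ n, (T n).1) = ⊤ := by
    rw [span_iUnion]
    rw [eq_top_iff]
    intro x _
    obtain ⟨n, rfl⟩ := he x
    have h1 : e n ∈ (C (n + 1)).1 := hCe n
    rw [← (T (n + 1)).2.1] at h1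
    exact le_iSup (fun n => span ℤ (T n).1) (n + 1) h1
  have hb : ⊤ ≤ span ℤ (Set.range ((↑) : (⋃ n, (T n).1) → Λ)) := by
    rw [Subtype.range_coe, hspanS]
  exact Module.Free.of_basis (Module.Basis.mk hind hb)
end
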